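/- arXiv:1908.06811 — 2 statements merged into one kernel-verified Lean document; each statement's English description precedes it below -/
import Mathlib

section
/- Let k be a field of characteristic ≠ 2 such that k*/(k*)² has order 2, let ℓ/k be a quadratic field extension with nontrivial k-automorphism σ, and suppose the norm map ℓ* → k*, x ↦ x·σ(x), is surjective. Let k_sq = {x² | x ∈ k} and k_sq* = {x² | x ∈ k, x ≠ 0}, and set M₁ = {m ∈ k | m² − 1 ∈ k_sq} and M₂ = {m ∈ k | m² − 1 ∉ k_sq*}. Then for all (a, b) ∈ k²: (i) if b = −a then (a, b) is not ℓ-admissible; (ii) if b = a then (a, b) is ℓ-admissible if and only if 1 − a² ∉ k_sq; (iii) if b² ≠ a², then (a, b) is ℓ-admissible if and only if (a + b)m₁ ≠ 2 + (a − b)m₂ for all (m₁, m₂) ∈ M₁ × M₂. -/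
open Module Function

variable {k ℓ : Type}

/-- The function `h_{a,b} : ℓ × ℓ → ℓ` associated with a pair `(a, b) ∈ k²`. -/
def hab [Field k] [Field ℓ] [Algebra k ℓ] (σ : ℓ ≃ₐ[k] ℓ) (a b : k) (x y : ℓ) : ℓ :=
  x ^ 2 - y ^ 2 + algebraMap k ℓ a * (x * σ x) + algebraMap k ℓ b * (y * σ y)

/-- A pair `(a, b) ∈ k²` is `ℓ`-admissible if `h_{a,b}` is anisotropic. -/
def IsAdmissiblePair [Field k] [Field ℓ] [Algebra k ℓ] (σ : ℓ ≃ₐ[k] ℓ)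
    (a b : k) : Prop :=
  ∀ x y : ℓ, hab σ a b x y = 0 → x = 0 ∧ y = 0

/-!
Choose `e ∈ ℓ` with `σ e = -e`. Then `ℓ = k ⊕ k e` and `e² = d` for a non-square `d ∈ k`.
In coordinates `x = x₁ + x₂ e`, `y = y₁ + y₂ e` the equation `h_{a,b}(x, y) = 0` splits into
`(1+a) x₁² + (1-a) d x₂² - (1-b) y₁² - (1+b) d y₂² = 0` and `x₁ x₂ = y₁ y₂`. The second
equation means `(x₁, x₂, y₁, y₂) = (p s, q t, q s, p t)`, and then the first one reads
`s² F(a,b;p,q) = d t² F(b,a;p,q)` with `F(a,b;p,q) = (1+a) p² - (1-b) q²`. As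
`k*/k*² = {1, d}`, this binary form in `(s, t)` is isotropic iff `G = F(a,b) F(b,a)` is not a
nonzero square at `(p, q)`.

For `b = a`, `G = F(a,a)²` is not a nonzero square iff `F(a,a)` vanishes, which happens at some
`(p, q) ≠ 0` iff `1 - a²` is a square. For `b² ≠ a²`, homogeneity of `G` lets us take
`(p, q) = (h - 1, h + 1)` with `h ≠ 0`; the elements of `M₁` are exactly `m₁ = (h + h⁻¹)/2`, the
linear relation then determines `m₂`, and `G(h - 1, h + 1) = (2 (a - b) h)² (m₂² - 1)`.
-/

section QuadraticExtension

variable [Field k] [Field ℓ] [Algebra k ℓ]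

theorem eq_zero_of_algebraMap_add_mul_eq_zero {z : ℓ} (hz : z ∉ Set.range (algebraMap k ℓ))
    {u v : k} (h : algebraMap k ℓ u + algebraMap k ℓ v * z = 0) : u = 0 ∧ v = 0 := by
  obtain rfl | hv := eq_or_ne v 0
  · simpa using h
  · refine absurd ⟨-u / v, ?_⟩ hz
    rw [map_div₀, map_neg, div_eq_iff (by simpa using hv)]
    linear_combination -h

theorem exists_algebraMap_add_mul (hquad : finrank k ℓ = 2) {z : ℓ}
    (hz : z ∉ Set.range (algebraMap k ℓ)) (x : ℓ) :
    ∃ u v : k, x = algebraMap k ℓ u + algebraMap k ℓ v * z := by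
  have hli : LinearIndependent k ![1, z] := by
    refine (LinearIndependent.pair_iff' one_ne_zero).2 fun c hc => hz ⟨c, ?_⟩
    simpa [Algebra.smul_def] using hc
  have hspan := hli.span_eq_top_of_card_eq_finrank (by simp [hquad])
  have hx : x ∈ Submodule.span k {1, z} := by
    rw [← Matrix.range_cons_cons_empty 1 z ![], hspan]
    exact Submodule.mem_top
  obtain ⟨u, v, huv⟩ := Submodule.mem_span_pair.1 hx
  exact ⟨u, v, by simpa [Algebra.smul_def] using huv.symm⟩

variable (σ : ℓ ≃ₐ[k] ℓ)

theorem exists_map_eq_neg (hquad : finrank k ℓ = 2) (hσ : ∃ x : ℓ, σ x ≠ x) :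
    ∃ e : ℓ, e ≠ 0 ∧ σ e = -e := by
  obtain ⟨w, hw⟩ := hσ
  have hwk : w ∉ Set.range (algebraMap k ℓ) := by
    rintro ⟨c, rfl⟩
    exact hw (σ.commutes c)
  obtain ⟨u, v, hsq⟩ := exists_algebraMap_add_mul hquad hwk (w ^ 2)
  -- `σ w` is the other root of `X ^ 2 - v X - u`
  have hconj : σ w = algebraMap k ℓ v - w := by
    have hσsq : σ w ^ 2 = algebraMap k ℓ u + algebraMap k ℓ v * σ w := by
      simpa [σ.commutes] using congrArg σ hsq
    have : (σ w - w) * (σ w + w - algebraMap k ℓ v) = 0 := by linear_combination hσsq - hsq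
    linear_combination (mul_eq_zero.1 this).resolve_left (sub_ne_zero.2 hw)
  refine ⟨w - σ w, sub_ne_zero.2 (Ne.symm hw), ?_⟩
  rw [map_sub, hconj, map_sub, σ.commutes]
  linear_combination hconj

theorem notMem_range_of_map_eq_neg (hchar : (2 : k) ≠ 0) {e : ℓ} (he0 : e ≠ 0) (he : σ e = -e) :
    e ∉ Set.range (algebraMap k ℓ) := by
  rintro ⟨c, rfl⟩
  rw [σ.commutes, eq_neg_iff_add_eq_zero, ← map_add, map_eq_zero, ← two_mul] at he
  exact he0 (by simp [(mul_eq_zero.1 he).resolve_left hchar])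

theorem exists_sq_eq_algebraMap (hquad : finrank k ℓ = 2) (hchar : (2 : k) ≠ 0) {e : ℓ}
    (he0 : e ≠ 0) (he : σ e = -e) : ∃ d : k, e ^ 2 = algebraMap k ℓ d ∧ ¬ IsSquare d := by
  have hek := notMem_range_of_map_eq_neg σ hchar he0 he
  obtain ⟨u, v, hsq⟩ := exists_algebraMap_add_mul hquad hek (e ^ 2)
  have hσsq : e ^ 2 = algebraMap k ℓ u - algebraMap k ℓ v * e := by
    have := congrArg σ hsq
    simp only [map_pow, map_add, map_mul, σ.commutes, he] at this
    linear_combination this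
  have hv : v = 0 := by
    have := eq_zero_of_algebraMap_add_mul_eq_zero hek (u := 0) (v := 2 * v)
      (by simp only [map_zero, map_mul, map_ofNat]; linear_combination hσsq - hsq)
    simpa [hchar] using this.2
  have hd : e ^ 2 = algebraMap k ℓ u := by simpa [hv] using hsq
  refine ⟨u, hd, ?_⟩
  rintro ⟨r, rfl⟩
  have : (e - algebraMap k ℓ r) * (e + algebraMap k ℓ r) = 0 := by
    rw [map_mul] at hd
    linear_combination hd
  rcases mul_eq_zero.1 this with h | h
  · exact hek ⟨r, by linear_combination -h⟩
  · exact hek ⟨-r, by rw [map_neg]; linear_combination -h⟩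

theorem hab_algebraMap_add_mul {e : ℓ} (he : σ e = -e) {d : k} (hd : e ^ 2 = algebraMap k ℓ d)
    (a b x₁ x₂ y₁ y₂ : k) :
    hab σ a b (algebraMap k ℓ x₁ + algebraMap k ℓ x₂ * e)
        (algebraMap k ℓ y₁ + algebraMap k ℓ y₂ * e) =
      algebraMap k ℓ ((1 + a) * x₁ ^ 2 + (1 - a) * d * x₂ ^ 2
          - (1 - b) * y₁ ^ 2 - (1 + b) * d * y₂ ^ 2)
        + algebraMap k ℓ (2 * (x₁ * x₂ - y₁ * y₂)) * e := by
  simp only [hab, map_add, map_sub, map_mul, map_pow, map_ofNat, map_one, σ.commutes, he]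
  linear_combination (algebraMap k ℓ x₂ ^ 2 - algebraMap k ℓ y₂ ^ 2
    - algebraMap k ℓ a * algebraMap k ℓ x₂ ^ 2 - algebraMap k ℓ b * algebraMap k ℓ y₂ ^ 2) * hd

end QuadraticExtension

namespace PairAdmissibility

section SquareClasses

variable [Field k]

def IsNonzeroSquare (c : k) : Prop := ∃ x : k, x ≠ 0 ∧ c = x ^ 2

theorem isNonzeroSquare_sq_iff (c : k) : IsNonzeroSquare (c ^ 2) ↔ c ≠ 0 := by
  refine ⟨?_, fun hc => ⟨c, hc, rfl⟩⟩
  rintro ⟨x, hx, h⟩ rfl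
  exact hx (pow_eq_zero_iff two_ne_zero |>.1 (by simpa using h.symm))

theorem isNonzeroSquare_sq_mul_iff {c : k} (hc : c ≠ 0) (x : k) :
    IsNonzeroSquare (c ^ 2 * x) ↔ IsNonzeroSquare x := by
  constructor
  · rintro ⟨y, hy, h⟩
    refine ⟨y / c, div_ne_zero hy hc, ?_⟩
    field_simp
    linear_combination h
  · rintro ⟨y, hy, rfl⟩
    exact ⟨c * y, mul_ne_zero hc hy, by ring⟩

theorem mem_range_powMonoidHom_two_iff (u : kˣ) :
    u ∈ (powMonoidHom 2 : kˣ →* kˣ).range ↔ IsSquare (u : k) := by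
  constructor
  · rintro ⟨v, rfl⟩
    exact ⟨v, by simp [sq]⟩
  · rintro ⟨r, hr⟩
    have hr0 : r ≠ 0 := by rintro rfl; simp at hr
    exact ⟨Units.mk0 r hr0, Units.ext (by simp [sq, hr])⟩

theorem isSquare_mul_of_not_isSquare (hidx : ((powMonoidHom 2 : kˣ →* kˣ).range).index = 2)
    {c c' : k} (hc : ¬ IsSquare c) (hc' : ¬ IsSquare c') : IsSquare (c * c') := by
  have hc0 : c ≠ 0 := by rintro rfl; exact hc ⟨0, by simp⟩
  have hc'0 : c' ≠ 0 := by rintro rfl; exact hc' ⟨0, by simp⟩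
  have hmem :=
    Subgroup.mul_mem_iff_of_index_two hidx (a := Units.mk0 c hc0) (b := Units.mk0 c' hc'0)
  simp only [mem_range_powMonoidHom_two_iff, Units.val_mul, Units.val_mk0] at hmem
  exact hmem.2 (iff_of_false hc hc')

theorem exists_sq_mul_eq_iff {d : k} (hd : ¬ IsSquare d)
    (hmul : ∀ c : k, ¬ IsSquare c → IsSquare (d * c)) (A B : k) :
    (∃ s t : k, (s ≠ 0 ∨ t ≠ 0) ∧ s ^ 2 * A = d * t ^ 2 * B) ↔ ¬ IsNonzeroSquare (A * B) := by
  constructor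
  · rintro ⟨s, t, hst, h⟩ ⟨x, hx, hAB⟩
    have hB : B ≠ 0 := by rintro rfl; exact hx (by simpa using hAB.symm)
    have hsx : (s * x) ^ 2 = d * (t * B) ^ 2 := by
      rw [mul_pow, ← hAB]
      linear_combination B * h
    have htB : t * B ≠ 0 := by
      refine mul_ne_zero (fun ht => ?_) hB
      subst ht
      have hs : s = 0 := by simpa [hx] using hsx
      simp_all
    refine hd ⟨s * x / (t * B), ?_⟩
    rw [div_mul_div_comm, eq_div_iff (mul_ne_zero htB htB)]
    linear_combination -hsx
  · intro hAB
    by_cases hA : A = 0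
    · exact ⟨1, 0, by simp, by simp [hA]⟩
    by_cases hB : B = 0
    · exact ⟨0, 1, by simp, by simp [hB]⟩
    obtain ⟨u, hu⟩ := hmul (A * B) fun ⟨r, hr⟩ =>
      hAB ⟨r, by rintro rfl; simp_all, by rw [hr, sq]⟩
    exact ⟨u, A, Or.inr hA, by linear_combination -A * hu⟩

end SquareClasses

section Forms

variable [Field k]

def F (a b p q : k) : k := (1 + a) * p ^ 2 - (1 - b) * q ^ 2

def G (a b p q : k) : k := F a b p q * F b a p q

theorem exists_eq_mul_of_mul_eq_mul {x₁ x₂ y₁ y₂ : k} (h : x₁ * x₂ = y₁ * y₂)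
    (hne : x₁ ≠ 0 ∨ x₂ ≠ 0 ∨ y₁ ≠ 0 ∨ y₂ ≠ 0) :
    ∃ p q s t : k, (p ≠ 0 ∨ q ≠ 0) ∧ (s ≠ 0 ∨ t ≠ 0) ∧
      x₁ = p * s ∧ x₂ = q * t ∧ y₁ = q * s ∧ y₂ = p * t := by
  obtain hx₁ | rfl := ne_or_eq x₁ 0
  · refine ⟨x₁, y₁, 1, y₂ / x₁, Or.inl hx₁, Or.inl one_ne_zero, by ring, ?_, by ring, ?_⟩ <;>
      field_simp
    linear_combination h
  obtain hy₁ | rfl := ne_or_eq y₁ 0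
  · refine ⟨0, y₁, 1, x₂ / y₁, Or.inr hy₁, Or.inl one_ne_zero, by ring, ?_, by ring, ?_⟩ <;>
      field_simp
    linear_combination -h
  exact ⟨y₂, x₂, 0, 1, by tauto, Or.inr one_ne_zero, by ring, by ring, by ring, by ring⟩

theorem exists_G_self_iff (a : k) :
    (∃ p q : k, (p ≠ 0 ∨ q ≠ 0) ∧ ¬ IsNonzeroSquare (G a a p q)) ↔ IsSquare (1 - a ^ 2) := by
  simp only [G, ← sq, isNonzeroSquare_sq_iff, not_not]
  constructor
  · rintro ⟨p, q, hpq, h⟩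
    obtain rfl | ha := eq_or_ne a (-1)
    · exact ⟨0, by ring⟩
    have ha' : 1 + a ≠ 0 := fun h => ha (by linear_combination h)
    have hq : q ≠ 0 := by
      rintro rfl
      simp_all [F]
    refine ⟨(1 + a) * p / q, ?_⟩
    rw [div_mul_div_comm, eq_div_iff (mul_ne_zero hq hq)]
    unfold F at h
    linear_combination -(1 + a) * h
  · rintro ⟨c, hc⟩
    obtain rfl | ha := eq_or_ne a (-1)
    · exact ⟨1, 0, by simp, by simp [F]⟩
    refine ⟨c, 1 + a, Or.inr fun h => ha (by linear_combination h), ?_⟩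
    unfold F
    linear_combination -(1 + a) * hc

theorem G_mul_mul (a b c p q : k) : G a b (c * p) (c * q) = (c ^ 2) ^ 2 * G a b p q := by
  unfold G F
  ring

theorem G_self (a b p : k) : G a b p p = ((a + b) * p ^ 2) ^ 2 := by
  unfold G F
  ring

theorem G_neg_right (a b p q : k) : G a b p (-q) = G a b p q := by
  unfold G F
  ring

theorem exists_G_iff_exists_G_sub_one_add_one (hchar : (2 : k) ≠ 0) {a b : k} (hab : a + b ≠ 0) :
    (∃ p q : k, (p ≠ 0 ∨ q ≠ 0) ∧ ¬ IsNonzeroSquare (G a b p q)) ↔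
      ∃ h : k, h ≠ 0 ∧ ¬ IsNonzeroSquare (G a b (h - 1) (h + 1)) := by
  constructor
  · rintro ⟨p, q, hpq, hG⟩
    have hdiag : p ≠ 0 → IsNonzeroSquare (G a b p p) := fun hp => by
      rw [G_self, isNonzeroSquare_sq_iff]
      exact mul_ne_zero hab (pow_ne_zero 2 hp)
    have hqp : q - p ≠ 0 := by
      intro h
      obtain rfl : q = p := by linear_combination h
      exact hG (hdiag (by tauto))
    have hqp' : q + p ≠ 0 := by
      intro h
      obtain rfl : q = -p := by linear_combination h
      rw [G_neg_right] at hG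
      exact hG (hdiag (by simpa using hpq))
    refine ⟨(q + p) / (q - p), div_ne_zero hqp' hqp, fun h => hG ?_⟩
    have hpq_eq : G a b p q = (((q - p) / 2) ^ 2) ^ 2 *
        G a b ((q + p) / (q - p) - 1) ((q + p) / (q - p) + 1) := by
      rw [← G_mul_mul]
      congr 1 <;> field_simp <;> ring
    rwa [hpq_eq, isNonzeroSquare_sq_mul_iff (pow_ne_zero 2 (div_ne_zero hqp hchar))]
  · rintro ⟨h, -, hG⟩
    refine ⟨h - 1, h + 1, ?_, hG⟩
    by_contra! hh
    exact hchar (by linear_combination hh.2 - hh.1)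

theorem G_sub_one_add_one_eq {a b h m : k}
    (hm : (a + b) * (h ^ 2 + 1) - 4 * h = 2 * (a - b) * h * m) :
    G a b (h - 1) (h + 1) = (2 * (a - b) * h) ^ 2 * (m ^ 2 - 1) := by
  have : G a b (h - 1) (h + 1) = ((a + b) * (h ^ 2 + 1) - 4 * h) ^ 2 - (2 * (a - b) * h) ^ 2 := by
    unfold G F
    ring
  rw [this, hm]
  ring

theorem exists_G_sub_one_add_one_iff (hchar : (2 : k) ≠ 0) {a b : k} (hab : a - b ≠ 0) :
    (∃ h : k, h ≠ 0 ∧ ¬ IsNonzeroSquare (G a b (h - 1) (h + 1))) ↔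
      ∃ m₁ : k, IsSquare (m₁ ^ 2 - 1) ∧
        ∃ m₂ : k, ¬ IsNonzeroSquare (m₂ ^ 2 - 1) ∧ (a + b) * m₁ = 2 + (a - b) * m₂ := by
  constructor
  · rintro ⟨h, hh, hG⟩
    have hT : 2 * (a - b) * h ≠ 0 := by simp [hchar, hab, hh]
    set m₂ := ((a + b) * (h ^ 2 + 1) - 4 * h) / (2 * (a - b) * h) with hm₂
    refine ⟨(h ^ 2 + 1) / (2 * h), ⟨(h ^ 2 - 1) / (2 * h), by field_simp; ring⟩,
      m₂, fun hsq => hG ?_, by rw [hm₂]; field_simp; ring⟩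
    rw [G_sub_one_add_one_eq (m := m₂) (by rw [hm₂]; field_simp)]
    exact (isNonzeroSquare_sq_mul_iff hT _).2 hsq
  · rintro ⟨m₁, ⟨r, hr⟩, m₂, hm₂, hrel⟩
    have hh : (m₁ + r) * (m₁ - r) = 1 := by linear_combination hr
    refine ⟨m₁ + r, left_ne_zero_of_mul_eq_one hh, fun hG => hm₂ ?_⟩
    rw [G_sub_one_add_one_eq (m := m₂) (by linear_combination -(a + b) * hr + 2 * (m₁ + r) * hrel)]
      at hG
    exact (isNonzeroSquare_sq_mul_iff
      (by simp [hchar, hab, left_ne_zero_of_mul_eq_one hh]) _).1 hG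

end Forms

section Admissibility

variable [Field k] [Field ℓ] [Algebra k ℓ] (σ : ℓ ≃ₐ[k] ℓ)

theorem not_isAdmissiblePair_iff (hquad : finrank k ℓ = 2) (hchar : (2 : k) ≠ 0) {e : ℓ}
    (he0 : e ≠ 0) (he : σ e = -e) {d : k} (hd : e ^ 2 = algebraMap k ℓ d) (a b : k) :
    ¬ IsAdmissiblePair σ a b ↔ ∃ p q : k, (p ≠ 0 ∨ q ≠ 0) ∧
      ∃ s t : k, (s ≠ 0 ∨ t ≠ 0) ∧ s ^ 2 * F a b p q = d * t ^ 2 * F b a p q := by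
  have hek := notMem_range_of_map_eq_neg σ hchar he0 he
  simp only [IsAdmissiblePair, not_forall, exists_prop]
  constructor
  · rintro ⟨x, y, hxy, hne⟩
    obtain ⟨x₁, x₂, rfl⟩ := exists_algebraMap_add_mul hquad hek x
    obtain ⟨y₁, y₂, rfl⟩ := exists_algebraMap_add_mul hquad hek y
    rw [hab_algebraMap_add_mul σ he hd] at hxy
    obtain ⟨hK, hE⟩ := eq_zero_of_algebraMap_add_mul_eq_zero hek hxy
    obtain ⟨p, q, s, t, hpq, hst, rfl, rfl, rfl, rfl⟩ :=
      exists_eq_mul_of_mul_eq_mul (by simpa [hchar, sub_eq_zero] using hE)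
        (by contrapose! hne; simp [hne])
    exact ⟨p, q, hpq, s, t, hst, by unfold F; linear_combination hK⟩
  · rintro ⟨p, q, hpq, s, t, hst, h⟩
    refine ⟨algebraMap k ℓ (p * s) + algebraMap k ℓ (q * t) * e,
      algebraMap k ℓ (q * s) + algebraMap k ℓ (p * t) * e, ?_, ?_⟩
    · rw [hab_algebraMap_add_mul σ he hd]
      have hK : (1 + a) * (p * s) ^ 2 + (1 - a) * d * (q * t) ^ 2 - (1 - b) * (q * s) ^ 2
          - (1 + b) * d * (p * t) ^ 2 = 0 := by
        unfold F at h
        linear_combination h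
      rw [hK, show p * s * (q * t) - q * s * (p * t) = 0 by ring]
      simp
    · rintro ⟨hx, hy⟩
      obtain ⟨hps, hqt⟩ := eq_zero_of_algebraMap_add_mul_eq_zero hek hx
      obtain ⟨hqs, hpt⟩ := eq_zero_of_algebraMap_add_mul_eq_zero hek hy
      rcases hpq with hp | hq <;> rcases hst with hs | ht <;> simp_all

end Admissibility

end PairAdmissibility

open PairAdmissibility

theorem pair_admissibility_general [Field k] [Field ℓ] [Algebra k ℓ]
    (hchar : (2 : k) ≠ 0)
    (hidx : ((powMonoidHom 2 : kˣ →* kˣ).range).index = 2)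
    (hquad : finrank k ℓ = 2)
    (σ : ℓ ≃ₐ[k] ℓ) (hσ : ∃ x : ℓ, σ x ≠ x)
    (a b : k) :
    -- (i)
    (b = -a → ¬ IsAdmissiblePair σ a b) ∧
    -- (ii)
    (b = a → (IsAdmissiblePair σ a b ↔ ¬ ∃ x : k, 1 - a ^ 2 = x ^ 2)) ∧
    -- (iii)
    (b ^ 2 ≠ a ^ 2 →
      (IsAdmissiblePair σ a b ↔
        ∀ m₁ ∈ {m : k | ∃ x : k, m ^ 2 - 1 = x ^ 2},
        ∀ m₂ ∈ {m : k | ¬ ∃ x : k, x ≠ 0 ∧ m ^ 2 - 1 = x ^ 2},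
          (a + b) * m₁ ≠ 2 + (a - b) * m₂)) := by
  obtain ⟨e, he0, he⟩ := exists_map_eq_neg σ hquad hσ
  obtain ⟨d, hed, hd⟩ := exists_sq_eq_algebraMap σ hquad hchar he0 he
  have key : ¬ IsAdmissiblePair σ a b ↔
      ∃ p q : k, (p ≠ 0 ∨ q ≠ 0) ∧ ¬ IsNonzeroSquare (G a b p q) := by
    simp only [not_isAdmissiblePair_iff σ hquad hchar he0 he hed,
      exists_sq_mul_eq_iff hd (fun c => isSquare_mul_of_not_isSquare hidx hd), G]
  refine ⟨fun hba hadm => ?_, fun hba => ?_, fun hne => ?_⟩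
  · exact one_ne_zero (hadm 1 1 (by simp [hab, hba])).1
  · subst hba
    rw [← not_iff_not, not_not, key, exists_G_self_iff, isSquare_iff_exists_sq]
  · have hsum : a + b ≠ 0 := fun h => hne (by linear_combination (b - a) * h)
    have hdiff : a - b ≠ 0 := fun h => hne (by linear_combination -(a + b) * h)
    rw [← not_iff_not, key, exists_G_iff_exists_G_sub_one_add_one hchar hsum,
      exists_G_sub_one_add_one_iff hchar hdiff]
    simp [isSquare_iff_exists_sq, IsNonzeroSquare]

/-- Let `k` be a field of characteristic ≠ 2 with `k*/(k*)²` of order 2, let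
`ℓ/k` be a quadratic field extension with surjective norm map, and let
`M₁ = {m | m² − 1 ∈ k_sq}`, `M₂ = {m | m² − 1 ∉ k_sq*}`. Then for all `(a, b) ∈ k²`:
(i) if `b = −a` then `(a, b)` is not `ℓ`-admissible;
(ii) if `b = a` then `(a, b)` is `ℓ`-admissible iff `1 − a² ∉ k_sq`;
(iii) if `b² ≠ a²`, then `(a, b)` is `ℓ`-admissible iff
`(a + b)·m₁ ≠ 2 + (a − b)·m₂` for all `(m₁, m₂) ∈ M₁ × M₂`. -/
theorem pair_admissibility [Field k] [Field ℓ] [Algebra k ℓ]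
    (hchar : (2 : k) ≠ 0)
    (hidx : ((powMonoidHom 2 : kˣ →* kˣ).range).index = 2)
    (hquad : finrank k ℓ = 2)
    (σ : ℓ ≃ₐ[k] ℓ) (hσ : ∃ x : ℓ, σ x ≠ x)
    (hnorm : ∀ t : k, t ≠ 0 → ∃ x : ℓ, x * σ x = algebraMap k ℓ t)
    (a b : k) :
    -- (i)
    (b = -a → ¬ IsAdmissiblePair σ a b) ∧
    -- (ii)
    (b = a → (IsAdmissiblePair σ a b ↔ ¬ ∃ x : k, 1 - a ^ 2 = x ^ 2)) ∧
    -- (iii)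
    (b ^ 2 ≠ a ^ 2 →
      (IsAdmissiblePair σ a b ↔
        ∀ m₁ ∈ {m : k | ∃ x : k, m ^ 2 - 1 = x ^ 2},
        ∀ m₂ ∈ {m : k | ¬ ∃ x : k, x ≠ 0 ∧ m ^ 2 - 1 = x ^ 2},
          (a + b) * m₁ ≠ 2 + (a - b) * m₂)) :=
  pair_admissibility_general hchar hidx hquad σ hσ a b
end

section
/- Let k be a field of characteristic ≠ 2, ℓ/k a quadratic field extension, and c = (c₁, c₂, c₃) ∈ k³ an ℓ-admissible triple. For a ∈ ℓ, a ≠ 0, define φ_a, ψ_a : ℓ × ℓ → ℓ × ℓ by φ_a(x, y) = (x, a y) and ψ_a(x, y) = (σ(x), a σ(y)). Then: (i) if c₂ = 0, the subgroup of Aut(A(ℓ, c)) generated by φ_{−1} and ψ₁ is a proper subgroup; (ii) if c₂ ≠ 0, then Aut(A(ℓ, c)) = {φ₁, φ_{−1}, ψ₁, ψ_{−1}} is exactly the subgroup generated by φ_{−1} and ψ₁, which is Klein's four-group. -/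
open Module Function

variable {k ℓ : Type}

/-- The function `q_c : ℓ × ℓ → ℓ` associated with a triple `c = (c₁, c₂, c₃) ∈ k³`. -/
def qc [Field k] [Field ℓ] [Algebra k ℓ] (σ : ℓ ≃ₐ[k] ℓ) (c : k × k × k) (x y : ℓ) : ℓ :=
  (1 - algebraMap k ℓ c.1) * x ^ 2 + algebraMap k ℓ c.1 * (x * σ x)
    - algebraMap k ℓ c.2.1 * y ^ 2 - algebraMap k ℓ c.2.2 * (y * σ y)

/-- A triple `c ∈ k³` is `ℓ`-admissible if `q_c` is anisotropic. -/
def IsAdmissibleTriple [Field k] [Field ℓ] [Algebra k ℓ] (σ : ℓ ≃ₐ[k] ℓ)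
    (c : k × k × k) : Prop :=
  ∀ x y : ℓ, qc σ c x y = 0 → x = 0 ∧ y = 0

/-- The multiplication of the 4-dimensional `k`-algebra `A(ℓ, c)` on `ℓ × ℓ`. -/
def Amul [Field k] [Field ℓ] [Algebra k ℓ] (σ : ℓ ≃ₐ[k] ℓ) (c : k × k × k)
    (p q : ℓ × ℓ) : ℓ × ℓ :=
  (p.1 * q.1 + (algebraMap k ℓ c.2.1 * p.2 + algebraMap k ℓ c.2.2 * σ p.2) * q.2,
   p.2 * q.1 + ((1 - algebraMap k ℓ c.1) * p.1 + algebraMap k ℓ c.1 * σ p.1) * q.2)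

/-- The map `φ_a(x, y) = (x, a·y)`. -/
def phiMap [Field ℓ] (a : ℓ) (p : ℓ × ℓ) : ℓ × ℓ := (p.1, a * p.2)

/-- The map `ψ_a(x, y) = (σ(x), a·σ(y))`. -/
def psiMap [Field k] [Field ℓ] [Algebra k ℓ] (σ : ℓ ≃ₐ[k] ℓ) (a : ℓ) (p : ℓ × ℓ) :
    ℓ × ℓ := (σ p.1, a * σ p.2)

/-- `μ` is an automorphism of the `k`-algebra `A(ℓ, c)`: a `k`-linear bijection preserving
the multiplication. -/
def IsAuto [Field k] [Field ℓ] [Algebra k ℓ] (σ : ℓ ≃ₐ[k] ℓ) (c : k × k × k)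
    (μ : ℓ × ℓ → ℓ × ℓ) : Prop :=
  Function.Bijective μ ∧
  (∀ p q : ℓ × ℓ, μ (p + q) = μ p + μ q) ∧
  (∀ (t : k) (p : ℓ × ℓ), μ (t • p) = t • μ p) ∧
  (∀ p q : ℓ × ℓ, μ (Amul σ c p q) = Amul σ c (μ p) (μ q))

/-!
`A(ℓ, c)` is `ℤ/2`-graded with even part `ℓ × 0 ≅ ℓ` and unit `(1, 0)`; write `j = (0, 1)` and
fix `δ ∈ ℓ` with `σ δ = -δ`, so that `δ² ∈ k`. Since `(x, y) = (x, 0) + j·(y, 0)`, an automorphism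
`μ` is determined by its restriction to `ℓ × 0` and by `μ j`.

For `c₂ ≠ 0`, `μ` preserves `ℓ × 0`. If `c₁ = c₃ = 0`, then `A(ℓ, c) = ℓ[j]/(j² - c₂)` is a field by
admissibility, and the only square roots of `δ²` in it are `±δ`; otherwise `ℓ × 0` is exactly
the right nucleus, which automorphisms preserve. So `μ` acts on `ℓ` as `id` or `σ`, and comparing
`(μ j)²` and `(μ j · μ δ)²` with `j² = c₂ + c₃` and `(jδ)² = (c₂ - c₃)δ²` forces `μ j = ±j`.

For `c₂ = 0`, `φ_a` is an automorphism whenever `σ(a) a = 1`, e.g. `a = (1 - δ)/(1 + δ)`.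
-/

section QuadraticExtension

variable [Field k] [Field ℓ] [Algebra k ℓ]

lemma exists_eq_algebraMap_add_algebraMap_mul (hquad : finrank k ℓ = 2) {δ : ℓ}
    (hδ : δ ∉ Set.range (algebraMap k ℓ)) (w : ℓ) :
    ∃ s t : k, w = algebraMap k ℓ s + algebraMap k ℓ t * δ := by
  have hli : LinearIndependent k ![1, δ] := by
    refine (LinearIndependent.pair_iff' one_ne_zero).2 fun s hs => hδ ⟨s, ?_⟩
    rwa [Algebra.algebraMap_eq_smul_one]
  have hw : w ∈ Submodule.span k (Set.range ![1, δ]) := by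
    rw [hli.span_eq_top_of_card_eq_finrank (by simp [hquad])]
    trivial
  obtain ⟨s, t, hst⟩ := Submodule.mem_span_pair.1 (by simpa using hw)
  exact ⟨t, s, by rw [← hst, Algebra.smul_def, Algebra.smul_def, mul_one, add_comm]⟩

variable {σ : ℓ ≃ₐ[k] ℓ}

lemma exists_ne_zero_apply_eq_neg (hquad : finrank k ℓ = 2) (hσ : ∃ x : ℓ, σ x ≠ x) :
    ∃ δ : ℓ, δ ≠ 0 ∧ σ δ = -δ := by
  obtain ⟨x, hx⟩ := hσ
  have hxk : x ∉ Set.range (algebraMap k ℓ) := by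
    rintro ⟨s, rfl⟩
    exact hx (σ.commutes s)
  obtain ⟨m, n, hmn⟩ := exists_eq_algebraMap_add_algebraMap_mul hquad hxk (x * x)
  have hσmn : σ x * σ x = algebraMap k ℓ m + algebraMap k ℓ n * σ x := by
    simpa using congrArg σ hmn
  -- `x` and `σ x` are distinct roots of `X² - n X - m`, so their sum is `n`
  have hsum : σ x = algebraMap k ℓ n - x := by
    have h : (x - σ x) * (x + σ x - algebraMap k ℓ n) = 0 := by
      linear_combination hmn - hσmn
    linear_combination (mul_eq_zero.1 h).resolve_left (sub_ne_zero.2 hx.symm)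
  refine ⟨x - σ x, sub_ne_zero.2 hx.symm, ?_⟩
  rw [map_sub, hsum, map_sub, AlgEquiv.commutes, hsum]
  ring

lemma algebraMap_two_ne_zero (hchar : (2 : k) ≠ 0) : (2 : ℓ) ≠ 0 := by
  rw [← map_ofNat (algebraMap k ℓ) 2]
  exact (map_ne_zero _).2 hchar

lemma notMem_range_algebraMap_of_apply_eq_neg (hchar : (2 : k) ≠ 0) {δ : ℓ} (hδ0 : δ ≠ 0)
    (hσδ : σ δ = -δ) : δ ∉ Set.range (algebraMap k ℓ) := by
  rintro ⟨s, rfl⟩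
  rw [AlgEquiv.commutes, eq_neg_iff_add_eq_zero, ← two_mul] at hσδ
  exact mul_ne_zero (algebraMap_two_ne_zero hchar) hδ0 hσδ

lemma mem_range_algebraMap_of_apply_eq_self (hchar : (2 : k) ≠ 0) (hquad : finrank k ℓ = 2)
    {δ : ℓ} (hδ0 : δ ≠ 0) (hσδ : σ δ = -δ) {x : ℓ} (hx : σ x = x) :
    x ∈ Set.range (algebraMap k ℓ) := by
  obtain ⟨s, t, rfl⟩ := exists_eq_algebraMap_add_algebraMap_mul hquad
    (notMem_range_algebraMap_of_apply_eq_neg hchar hδ0 hσδ) x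
  have h2t : 2 * δ * algebraMap k ℓ t = 0 := by
    rw [map_add, map_mul, AlgEquiv.commutes, AlgEquiv.commutes, hσδ] at hx
    linear_combination -hx
  have ht : algebraMap k ℓ t = 0 :=
    (mul_eq_zero.1 h2t).resolve_left (mul_ne_zero (algebraMap_two_ne_zero hchar) hδ0)
  exact ⟨s, by rw [ht, zero_mul, add_zero]⟩

end QuadraticExtension

section Automorphisms

variable [Field k] [Field ℓ] [Algebra k ℓ] {σ : ℓ ≃ₐ[k] ℓ} {c : k × k × k}

lemma isAuto_phiMap {a : ℓ} (ha : a ≠ 0)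
    (h2 : algebraMap k ℓ c.2.1 * a ^ 2 = algebraMap k ℓ c.2.1)
    (h3 : algebraMap k ℓ c.2.2 * (σ a * a) = algebraMap k ℓ c.2.2) :
    IsAuto σ c (phiMap a) := by
  refine ⟨?_, fun p q => ?_, fun t p => ?_, fun p q => ?_⟩
  · exact bijective_iff_has_inverse.2 ⟨phiMap a⁻¹, fun p => by simp [phiMap, ha],
      fun p => by simp [phiMap, ha]⟩
  · simp [phiMap, mul_add]
  · simp [phiMap]
  · simp only [phiMap, Amul, map_mul, Prod.mk.injEq]
    constructor
    · linear_combination -(p.2 * q.2) * h2 - (σ p.2 * q.2) * h3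
    · ring

lemma isAuto_psiMap {a : ℓ} (ha : a ≠ 0)
    (h2 : algebraMap k ℓ c.2.1 * a ^ 2 = algebraMap k ℓ c.2.1)
    (h3 : algebraMap k ℓ c.2.2 * (σ a * a) = algebraMap k ℓ c.2.2) :
    IsAuto σ c (psiMap σ a) := by
  refine ⟨?_, fun p q => ?_, fun t p => ?_, fun p q => ?_⟩
  · exact bijective_iff_has_inverse.2 ⟨fun p => (σ.symm p.1, σ.symm (a⁻¹ * p.2)),
      fun p => by simp [psiMap, ha], fun p => by simp [psiMap, ha]⟩
  · simp [psiMap, mul_add]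
  · ext <;> simp [psiMap]
  · simp only [psiMap, Amul, map_add, map_mul, map_sub, map_one, AlgEquiv.commutes,
      Prod.mk.injEq]
    constructor
    · linear_combination -(σ p.2 * σ q.2) * h2 - (σ (σ p.2) * σ q.2) * h3
    · ring

lemma phiMap_ne_phiMap {a b : ℓ} (h : a ≠ b) : phiMap a ≠ phiMap b := fun hab =>
  h (by simpa [phiMap] using congrFun hab (0, 1))

lemma psiMap_ne_psiMap {a b : ℓ} (h : a ≠ b) : psiMap σ a ≠ psiMap σ b := fun hab =>
  h (by simpa [psiMap] using congrFun hab (0, 1))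

lemma phiMap_ne_psiMap (hσ : ∃ x : ℓ, σ x ≠ x) (a b : ℓ) : phiMap a ≠ psiMap σ b := by
  obtain ⟨x, hx⟩ := hσ
  intro hab
  exact hx (by simpa [phiMap, psiMap] using (congrFun hab (x, 0)).symm)

lemma Amul_one_left (z : ℓ × ℓ) : Amul σ c (1, 0) z = z := by
  simp [Amul]

lemma Amul_one_right (z : ℓ × ℓ) : Amul σ c z (1, 0) = z := by
  simp [Amul]

lemma Amul_inr_one_inl (y : ℓ) : Amul σ c (0, 1) (y, 0) = (0, y) := by
  simp [Amul]

lemma Amul_inl_inl (x y : ℓ) : Amul σ c (x, 0) (y, 0) = (x * y, 0) := by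
  simp [Amul]

lemma inl_algebraMap_eq_smul (r : k) : ((algebraMap k ℓ r, 0) : ℓ × ℓ) = r • (1, 0) := by
  simp [Algebra.smul_def]

def IsRightNuclear (σ : ℓ ≃ₐ[k] ℓ) (c : k × k × k) (u : ℓ × ℓ) : Prop :=
  ∀ p q : ℓ × ℓ, Amul σ c (Amul σ c p q) u = Amul σ c p (Amul σ c q u)

lemma isRightNuclear_inl (x : ℓ) : IsRightNuclear σ c (x, 0) := fun p q => by
  simp only [Amul, Prod.mk.injEq]
  constructor <;> ring

namespace IsAuto

variable {μ : ℓ × ℓ → ℓ × ℓ}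

lemma map_one (hμ : IsAuto σ c μ) : μ (1, 0) = (1, 0) := by
  obtain ⟨z, hz⟩ := hμ.1.2 (1, 0)
  calc μ (1, 0) = Amul σ c (μ (1, 0)) (μ z) := by rw [hz, Amul_one_right]
    _ = (1, 0) := by rw [← hμ.2.2.2, Amul_one_left, hz]

lemma map_algebraMap (hμ : IsAuto σ c μ) (r : k) :
    μ (algebraMap k ℓ r, 0) = (algebraMap k ℓ r, 0) := by
  rw [inl_algebraMap_eq_smul, hμ.2.2.1, hμ.map_one]

lemma apply_eq_add_Amul (hμ : IsAuto σ c μ) (x y : ℓ) :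
    μ (x, y) = μ (x, 0) + Amul σ c (μ (0, 1)) (μ (y, 0)) := by
  rw [← hμ.2.2.2, Amul_inr_one_inl, ← hμ.2.1, Prod.mk_add_mk, add_zero, zero_add]

lemma map_inl_algebraMap_add_mul (hμ : IsAuto σ c μ) (s t : k) (z : ℓ) :
    μ (algebraMap k ℓ s + algebraMap k ℓ t * z, 0) = (algebraMap k ℓ s, 0) + t • μ (z, 0) := by
  have h : ((algebraMap k ℓ s + algebraMap k ℓ t * z, 0) : ℓ × ℓ) =
      (algebraMap k ℓ s, 0) + t • (z, 0) := by
    simp [Algebra.smul_def]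
  rw [h, hμ.2.1, hμ.2.2.1, hμ.map_algebraMap]

lemma isRightNuclear (hμ : IsAuto σ c μ) {u : ℓ × ℓ} (hu : IsRightNuclear σ c u) :
    IsRightNuclear σ c (μ u) := by
  intro p q
  obtain ⟨p, rfl⟩ := hμ.1.2 p
  obtain ⟨q, rfl⟩ := hμ.1.2 q
  simp only [← hμ.2.2.2, hu p q]

end IsAuto

lemma snd_eq_zero_of_isRightNuclear (hchar : (2 : k) ≠ 0) {δ : ℓ} (hδ0 : δ ≠ 0)
    (hσδ : σ δ = -δ) (hc2 : c.2.1 ≠ 0) (hc13 : ¬(c.1 = 0 ∧ c.2.2 = 0)) {x y : ℓ}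
    (h : IsRightNuclear σ c (x, y)) : y = 0 := by
  by_contra hy
  have h2 : (2 : ℓ) ≠ 0 := algebraMap_two_ne_zero hchar
  have e1 := congrArg Prod.snd (h (δ, 0) (δ, 0))
  have e2 := congrArg Prod.fst (h (0, 1) (δ, 0))
  simp only [Amul, mul_zero, zero_mul, add_zero, zero_add, one_mul, mul_one, map_mul, map_one,
    hσδ] at e1 e2
  set c₁ := algebraMap k ℓ c.1 with hc₁
  set c₂ := algebraMap k ℓ c.2.1 with hc₂
  set c₃ := algebraMap k ℓ c.2.2 with hc₃
  have h1 : c₁ * (1 - c₁) = 0 := by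
    have : (2 * 2 * (δ * δ * y)) * (c₁ * (1 - c₁)) = 0 := by linear_combination e1
    exact (mul_eq_zero.1 this).resolve_left (by simp [h2, hδ0, hy])
  have h123 : c₁ * (c₂ + c₃) - c₃ = 0 := by
    have : (2 * (δ * y)) * (c₁ * (c₂ + c₃) - c₃) = 0 := by linear_combination e2
    exact (mul_eq_zero.1 this).resolve_left (by simp [h2, hδ0, hy])
  rcases mul_eq_zero.1 h1 with h1 | h1
  · rw [h1] at h123
    exact hc13 ⟨by simpa [hc₁] using h1, by simpa [hc₃] using h123⟩
  · exact hc2 (by simpa [hc₂] using (show c₂ = 0 by linear_combination h123 + (c₂ + c₃) * h1))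

lemma snd_eq_zero_of_Amul_self_eq_inl (hchar : (2 : k) ≠ 0) (hc : IsAdmissibleTriple σ c)
    (hc1 : c.1 = 0) (hc3 : c.2.2 = 0) {x a b : ℓ} (hx : x ≠ 0)
    (h : Amul σ c (a, b) (a, b) = (x * x, 0)) : b = 0 := by
  simp only [Amul, hc1, hc3, map_zero, Prod.mk.injEq] at h
  by_contra hb
  have ha : a = 0 := by
    have : (2 * b) * a = 0 := by linear_combination h.2
    exact (mul_eq_zero.1 this).resolve_left (mul_ne_zero (algebraMap_two_ne_zero hchar) hb)
  refine hx (hc x b ?_).1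
  simp only [qc, hc1, hc3, map_zero]
  linear_combination -h.1 + a * ha

lemma eq_zero_of_conj_combination_eq_zero (hchar : (2 : k) ≠ 0) {a p : ℓ} (ha : a ≠ 0)
    (hσa : σ a = -a) (r : k)
    (h1 : (2 - algebraMap k ℓ r) * p + algebraMap k ℓ r * σ p = 0)
    (h2 : (2 - algebraMap k ℓ r) * (p * a) + algebraMap k ℓ r * σ (p * a) = 0) : p = 0 := by
  have h2l := algebraMap_two_ne_zero (ℓ := ℓ) hchar
  rw [map_mul, hσa] at h2
  have hr : (2 * a) * (algebraMap k ℓ r * σ p) = 0 := by linear_combination a * h1 - h2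
  rcases mul_eq_zero.1 ((mul_eq_zero.1 hr).resolve_left (mul_ne_zero h2l ha)) with hr | hp
  · rw [hr] at h1
    exact (mul_eq_zero.1 (by linear_combination h1)).resolve_left h2l
  · simpa using hp

namespace IsAuto

variable {μ : ℓ × ℓ → ℓ × ℓ}

lemma map_inl_eq_self_or_eq_neg (hμ : IsAuto σ c μ) (hchar : (2 : k) ≠ 0)
    (hc : IsAdmissibleTriple σ c) (hc2 : c.2.1 ≠ 0) {δ : ℓ} (hδ0 : δ ≠ 0) (hσδ : σ δ = -δ)
    {d : k} (hd : algebraMap k ℓ d = δ * δ) :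
    μ (δ, 0) = (δ, 0) ∨ μ (δ, 0) = (-δ, 0) := by
  have hsq : Amul σ c (μ (δ, 0)) (μ (δ, 0)) = (δ * δ, 0) := by
    rw [← hμ.2.2.2, Amul_inl_inl, ← hd, hμ.map_algebraMap]
  rcases hu : μ (δ, 0) with ⟨a, b⟩
  rw [hu] at hsq
  obtain rfl : b = 0 := by
    by_cases h13 : c.1 = 0 ∧ c.2.2 = 0
    · exact snd_eq_zero_of_Amul_self_eq_inl hchar hc h13.1 h13.2 hδ0 hsq
    · exact snd_eq_zero_of_isRightNuclear hchar hδ0 hσδ hc2 h13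
        (hu ▸ hμ.isRightNuclear (isRightNuclear_inl δ))
  rw [Amul_inl_inl, Prod.mk.injEq] at hsq
  rcases mul_eq_zero.1 (show (a - δ) * (a + δ) = 0 by linear_combination hsq.1) with h | h
  · exact Or.inl (by rw [sub_eq_zero.1 h])
  · exact Or.inr (by rw [eq_neg_of_add_eq_zero_left h])

lemma map_inl_eq_id_or_conj (hμ : IsAuto σ c μ) (hchar : (2 : k) ≠ 0) (hquad : finrank k ℓ = 2)
    (hc : IsAdmissibleTriple σ c) (hc2 : c.2.1 ≠ 0) {δ : ℓ} (hδ0 : δ ≠ 0) (hσδ : σ δ = -δ)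
    {d : k} (hd : algebraMap k ℓ d = δ * δ) :
    (∀ x, μ (x, 0) = (x, 0)) ∨ (∀ x, μ (x, 0) = (σ x, 0)) := by
  have hspan := exists_eq_algebraMap_add_algebraMap_mul hquad
    (notMem_range_algebraMap_of_apply_eq_neg hchar hδ0 hσδ)
  rcases hμ.map_inl_eq_self_or_eq_neg hchar hc hc2 hδ0 hσδ hd with h | h
  · refine Or.inl fun x => ?_
    obtain ⟨s, t, rfl⟩ := hspan x
    rw [hμ.map_inl_algebraMap_add_mul, h]
    simp [Algebra.smul_def]
  · refine Or.inr fun x => ?_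
    obtain ⟨s, t, rfl⟩ := hspan x
    rw [hμ.map_inl_algebraMap_add_mul, h]
    simp [Algebra.smul_def, hσδ]

lemma map_inr_one_eq_or_eq_neg (hμ : IsAuto σ c μ) (hchar : (2 : k) ≠ 0) (hc2 : c.2.1 ≠ 0) {δ : ℓ}
    (hδ0 : δ ≠ 0) (hσδ : σ δ = -δ) {d : k} (hd : algebraMap k ℓ d = δ * δ)
    (hinl : (∀ x, μ (x, 0) = (x, 0)) ∨ (∀ x, μ (x, 0) = (σ x, 0))) :
    μ (0, 1) = (0, 1) ∨ μ (0, 1) = (0, -1) := by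
  obtain ⟨ρ, hρ, hρδ⟩ : ∃ ρ : ℓ → ℓ, (∀ x, μ (x, 0) = (ρ x, 0)) ∧ (ρ δ = δ ∨ ρ δ = -δ) := by
    rcases hinl with h | h
    exacts [⟨id, h, Or.inl rfl⟩, ⟨σ, h, Or.inr hσδ⟩]
  generalize ha : ρ δ = a at hρδ
  have ha0 : a ≠ 0 := by rcases hρδ with h | h <;> simp [h, hδ0]
  have hσa : σ a = -a := by rcases hρδ with h | h <;> simp [h, hσδ]
  have haa : a * a = δ * δ := by rcases hρδ with h | h <;> simp [h]
  rcases hJ : μ (0, 1) with ⟨p, q⟩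
  have hq : q ≠ 0 := by
    rintro rfl
    obtain ⟨⟨x, y⟩, hz⟩ := hμ.1.2 (0, 1)
    rw [hμ.apply_eq_add_Amul, hρ, hρ, hJ] at hz
    simpa [Amul] using congrArg Prod.snd hz
  have hJJ : Amul σ c (p, q) (p, q) = (algebraMap k ℓ (c.2.1 + c.2.2), 0) := by
    rw [← hJ, ← hμ.2.2.2, ← hμ.map_algebraMap]
    simp [Amul]
  have hK : Amul σ c (p * a, q * a) (p * a, q * a) =
      (algebraMap k ℓ ((c.2.1 - c.2.2) * d), 0) := by
    have hJδ : μ (0, δ) = (p * a, q * a) := by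
      rw [← Amul_inr_one_inl (σ := σ) (c := c), hμ.2.2.2, hJ, hρ, ha]
      simp [Amul]
    rw [← hJδ, ← hμ.2.2.2, ← hμ.map_algebraMap]
    simp only [Amul, hσδ, map_mul, map_sub, map_zero, mul_zero, zero_mul, add_zero, hd]
    congr 2
    ring
  simp only [Amul, Prod.mk.injEq, map_add, map_mul, map_sub, hσa, hd] at hJJ hK
  obtain rfl : p = 0 := eq_zero_of_conj_combination_eq_zero hchar ha0 hσa c.1
    ((mul_eq_zero.1 (by linear_combination hJJ.2)).resolve_left hq)
    ((mul_eq_zero.1 (by rw [map_mul, hσa]; linear_combination hK.2)).resolve_left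
      (mul_ne_zero hq ha0))
  have hqq : (2 * algebraMap k ℓ c.2.1 * (δ * δ)) * ((q - 1) * (q + 1)) = 0 := by
    linear_combination (δ * δ) * hJJ.1 + hK.1 +
      (algebraMap k ℓ c.2.2 * q * σ q - algebraMap k ℓ c.2.1 * q * q) * haa
  have hne : 2 * algebraMap k ℓ c.2.1 * (δ * δ) ≠ 0 := by
    simp [algebraMap_two_ne_zero hchar, hc2, hδ0]
  rcases mul_eq_zero.1 ((mul_eq_zero.1 hqq).resolve_left hne) with h | h
  · exact Or.inl (by rw [sub_eq_zero.1 h])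
  · exact Or.inr (by rw [eq_neg_of_add_eq_zero_left h])

lemma eq_phiMap_or_psiMap (hμ : IsAuto σ c μ) (hchar : (2 : k) ≠ 0)
    (hquad : finrank k ℓ = 2) (hc : IsAdmissibleTriple σ c) (hc2 : c.2.1 ≠ 0) {δ : ℓ}
    (hδ0 : δ ≠ 0) (hσδ : σ δ = -δ) {d : k} (hd : algebraMap k ℓ d = δ * δ) :
    μ = phiMap 1 ∨ μ = phiMap (-1) ∨ μ = psiMap σ 1 ∨ μ = psiMap σ (-1) := by
  have hinl := hμ.map_inl_eq_id_or_conj hchar hquad hc hc2 hδ0 hσδ hd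
  have hinr := hμ.map_inr_one_eq_or_eq_neg hchar hc2 hδ0 hσδ hd hinl
  rcases hinl with hx | hx <;> rcases hinr with hy | hy
  · refine Or.inl (funext fun ⟨x, y⟩ => ?_)
    simp [hμ.apply_eq_add_Amul x y, hx, hy, Amul, phiMap]
  · refine Or.inr (Or.inl (funext fun ⟨x, y⟩ => ?_))
    simp [hμ.apply_eq_add_Amul x y, hx, hy, Amul, phiMap]
  · refine Or.inr (Or.inr (Or.inl (funext fun ⟨x, y⟩ => ?_)))
    simp [hμ.apply_eq_add_Amul x y, hx, hy, Amul, psiMap]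
  · refine Or.inr (Or.inr (Or.inr (funext fun ⟨x, y⟩ => ?_)))
    simp [hμ.apply_eq_add_Amul x y, hx, hy, Amul, psiMap]

end IsAuto

lemma exists_apply_mul_self_eq_one_ne_one_ne_neg_one (hchar : (2 : k) ≠ 0) {δ : ℓ} (hδ0 : δ ≠ 0)
    (hσδ : σ δ = -δ) : ∃ a : ℓ, σ a * a = 1 ∧ a ≠ 1 ∧ a ≠ -1 := by
  have h2 := algebraMap_two_ne_zero (ℓ := ℓ) hchar
  have hδk := notMem_range_algebraMap_of_apply_eq_neg hchar hδ0 hσδ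
  have hp : 1 + δ ≠ 0 := fun h => hδk ⟨-1, by simp; linear_combination -h⟩
  have hm : 1 - δ ≠ 0 := fun h => hδk ⟨1, by simp; linear_combination h⟩
  refine ⟨(1 - δ) / (1 + δ), ?_, fun h => ?_, fun h => ?_⟩
  · rw [map_div₀, map_sub, map_add, map_one, hσδ, sub_neg_eq_add, ← sub_eq_add_neg]
    field_simp
  · rw [div_eq_one_iff_eq hp] at h
    exact hδ0 ((mul_eq_zero.1 (by linear_combination -h : 2 * δ = 0)).resolve_left h2)
  · rw [div_eq_iff hp] at h
    exact h2 (by linear_combination h)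

end Automorphisms

/-- Let `c` be an `ℓ`-admissible triple. The maps `φ₁, φ₋₁, ψ₁, ψ₋₁` are
four pairwise distinct automorphisms of `A(ℓ, c)`, forming the subgroup of `Aut(A(ℓ, c))`
generated by `φ₋₁` and `ψ₁` (Klein's four-group, as `φ₁ = id` and `φ₋₁∘ψ₁ = ψ₋₁`). Moreover:
(i) if `c₂ = 0`, this subgroup is a proper subgroup of `Aut(A(ℓ, c))` (there is an
automorphism outside it); (ii) if `c₂ ≠ 0`, then `Aut(A(ℓ, c)) = {φ₁, φ₋₁, ψ₁, ψ₋₁}`. -/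
theorem automorphism_group_of_Amul [Field k] [Field ℓ] [Algebra k ℓ]
    (hchar : (2 : k) ≠ 0) (hquad : finrank k ℓ = 2)
    (σ : ℓ ≃ₐ[k] ℓ) (hσ : ∃ x : ℓ, σ x ≠ x)
    (c : k × k × k) (hc : IsAdmissibleTriple σ c) :
    -- the four maps are automorphisms …
    IsAuto σ c (phiMap (1 : ℓ)) ∧ IsAuto σ c (phiMap (-1 : ℓ)) ∧
    IsAuto σ c (psiMap σ (1 : ℓ)) ∧ IsAuto σ c (psiMap σ (-1 : ℓ)) ∧
    -- … and are pairwise distinct (so ⟨φ₋₁, ψ₁⟩ is Klein's four-group)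
    List.Pairwise (· ≠ ·)
      [phiMap (1 : ℓ), phiMap (-1 : ℓ), psiMap σ (1 : ℓ), psiMap σ (-1 : ℓ)] ∧
    -- (i)
    (c.2.1 = 0 → ∃ μ : ℓ × ℓ → ℓ × ℓ, IsAuto σ c μ ∧
      μ ≠ phiMap (1 : ℓ) ∧ μ ≠ phiMap (-1 : ℓ) ∧
      μ ≠ psiMap σ (1 : ℓ) ∧ μ ≠ psiMap σ (-1 : ℓ)) ∧
    -- (ii)
    (c.2.1 ≠ 0 → ∀ μ : ℓ × ℓ → ℓ × ℓ, IsAuto σ c μ ↔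
      (μ = phiMap (1 : ℓ) ∨ μ = phiMap (-1 : ℓ) ∨
       μ = psiMap σ (1 : ℓ) ∨ μ = psiMap σ (-1 : ℓ))) := by
  obtain ⟨δ, hδ0, hσδ⟩ := exists_ne_zero_apply_eq_neg hquad hσ
  obtain ⟨d, hd⟩ := mem_range_algebraMap_of_apply_eq_self hchar hquad hδ0 hσδ
    (show σ (δ * δ) = δ * δ by rw [map_mul, hσδ, neg_mul_neg])
  have h1 : (1 : ℓ) ≠ -1 := fun h => algebraMap_two_ne_zero hchar (by linear_combination h)
  have hφ₁ : IsAuto σ c (phiMap (1 : ℓ)) := isAuto_phiMap one_ne_zero (by simp) (by simp)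
  have hφ₂ : IsAuto σ c (phiMap (-1 : ℓ)) := isAuto_phiMap (by simp) (by simp) (by simp)
  have hψ₁ : IsAuto σ c (psiMap σ (1 : ℓ)) := isAuto_psiMap one_ne_zero (by simp) (by simp)
  have hψ₂ : IsAuto σ c (psiMap σ (-1 : ℓ)) := isAuto_psiMap (by simp) (by simp) (by simp)
  refine ⟨hφ₁, hφ₂, hψ₁, hψ₂, ?_, fun hc2 => ?_, fun hc2 μ => ⟨fun hμ =>
    hμ.eq_phiMap_or_psiMap hchar hquad hc hc2 hδ0 hσδ hd, ?_⟩⟩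
  · simp [phiMap_ne_phiMap h1, psiMap_ne_psiMap h1, phiMap_ne_psiMap hσ]
  · obtain ⟨a, ha, ha₁, ha₂⟩ := exists_apply_mul_self_eq_one_ne_one_ne_neg_one hchar hδ0 hσδ
    exact ⟨phiMap a, isAuto_phiMap (right_ne_zero_of_mul_eq_one ha) (by simp [hc2])
      (by rw [ha, mul_one]), phiMap_ne_phiMap ha₁, phiMap_ne_phiMap ha₂,
      phiMap_ne_psiMap hσ _ _, phiMap_ne_psiMap hσ _ _⟩
  · rintro (rfl | rfl | rfl | rfl) <;> assumption
end
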